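/- Let f : Ω → f(Ω) ⊆ ℝⁿ be a homeomorphism of an open set Ω ⊆ ℝⁿ with f^{-1} ∈ W^{1,p}_loc(f(Ω),ℝⁿ) for some p ∈ (n−1, n), and suppose the oscillation estimate diam f^{-1}(B(y,r)) ≤ C r^{1−n/p} ( ∫_{B(y,2r)} |Df^{-1}|^p )^{1/p} holds (with C depending only on n, p) whenever B(y,2r) is compactly contained in f(Ω). Then there exists a set F ⊆ f(Ω) with H^{n−p/2}(F) = 0 such that for every y ∈ f(Ω) \ F there exist C_y > 0 and r_y > 0 with diam f^{-1}(B(y,r)) ≤ C_y r^{1/2} for all 0 < r < r_y. -/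

import Mathlib

open MeasureTheory Metric

open Filter Set
open scoped ENNReal NNReal Topology
set_option maxHeartbeats 1000000

lemma lemA {X : Type*} [MetricSpace X] [MeasurableSpace X] [BorelSpace X]
    [TopologicalSpace.SeparableSpace X] (μ : Measure X)
    (s V : Set X) (d : ℝ) (hd : 0 < d) (a : ℝ≥0∞)
    (h : ∀ ε : ℝ, 0 < ε → ∀ y ∈ s, ∃ ρ : ℝ, 0 < ρ ∧ ρ ≤ ε ∧
      (ENNReal.ofReal ρ) ^ d ≤ a * μ (Metric.ball y (2 * ρ)) ∧ Metric.ball y (2 * ρ) ⊆ V) :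
    μH[d] s ≤ (16 : ℝ≥0∞) ^ d * a * μ V := by
  classical
  have hdiam' : ∀ (x : X) (r : ℝ), 0 ≤ r → EMetric.diam (Metric.closedBall x r) ≤ 2 * ENNReal.ofReal r := by
    intro x r hr
    rw [← Metric.emetric_closedBall hr]
    exact EMetric.diam_closedBall
  -- for each scale, build a countable disjoint family via Vitali
  have hsel : ∀ k : ℕ, ∃ u : Set (X), ∃ ρ : X → ℝ, u ⊆ s ∧ u.Countable ∧
      (∀ y ∈ u, 0 < ρ y) ∧ (∀ y ∈ u, ρ y ≤ 1 / (k + 1)) ∧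
      (∀ y ∈ u, (ENNReal.ofReal (ρ y)) ^ d ≤ a * μ (Metric.ball y (2 * ρ y))) ∧
      (∀ y ∈ u, Metric.ball y (2 * ρ y) ⊆ V) ∧
      u.PairwiseDisjoint (fun y => Metric.closedBall y (2 * ρ y)) ∧
      s ⊆ ⋃ y ∈ u, Metric.closedBall y (8 * ρ y) := by
    intro k
    have hεk : (0 : ℝ) < 1 / (k + 1) := by positivity
    set ρ : X → ℝ := fun y => if hy : y ∈ s then (h _ hεk y hy).choose else 0 with hρdef
    have hρ : ∀ y ∈ s, 0 < ρ y ∧ ρ y ≤ 1 / (k + 1) ∧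
        (ENNReal.ofReal (ρ y)) ^ d ≤ a * μ (Metric.ball y (2 * ρ y)) ∧
        Metric.ball y (2 * ρ y) ⊆ V := by
      intro y hy
      simpa [hρdef, hy] using (h _ hεk y hy).choose_spec
    obtain ⟨u, hus, hdisj, hcov⟩ :=
      Vitali.exists_disjoint_subfamily_covering_enlargement_closedBall s (id : X → X)
        (fun y => 2 * ρ y) (2 * (1 / (k + 1)))
        (fun y hy => by have := (hρ y hy).2.1; linarith) 4 (by norm_num)
    refine ⟨u, ρ, hus, ?_, fun y hy => (hρ y (hus hy)).1,
      fun y hy => (hρ y (hus hy)).2.1, fun y hy => (hρ y (hus hy)).2.2.1,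
      fun y hy => (hρ y (hus hy)).2.2.2, hdisj, ?_⟩
    · refine hdisj.countable_of_nonempty_interior fun y hy => ?_
      have h0 : 0 < 2 * ρ y := by have := (hρ y (hus hy)).1; linarith
      exact (Metric.nonempty_ball.2 h0).mono ball_subset_interior_closedBall
    · intro y hy
      obtain ⟨b, hbu, hb⟩ := hcov y hy
      have h0 : 0 ≤ 2 * ρ y := by have := (hρ y hy).1; linarith
      have : y ∈ Metric.closedBall (id y) (2 * ρ y) := Metric.mem_closedBall_self h0
      have hy8 : y ∈ Metric.closedBall (id b) (4 * (2 * ρ b)) := hb this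
      refine Set.mem_biUnion hbu ?_
      simp only [Metric.mem_closedBall, id] at hy8 ⊢
      linarith
  choose u ρ hus hucnt hρ0 hρε hρμ hρV hdisj hcov using hsel
  haveI : ∀ k : ℕ, Countable (u k) := fun k => (hucnt k).to_subtype
  have main := Measure.hausdorffMeasure_le_liminf_tsum (l := atTop) d s
      (fun k : ℕ => ENNReal.ofReal (16 / (k + 1)))
      ?_ (fun k (i : u k) => Metric.closedBall (i : X) (8 * ρ k i)) ?_ ?_
  · refine main.trans ?_
    have hbound : ∀ k : ℕ, (∑' i : u k,
        EMetric.diam (Metric.closedBall (i : X) (8 * ρ k i)) ^ d) ≤ (16 : ℝ≥0∞) ^ d * a * μ V := by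
      intro k
      have h1 : ∀ i : u k, EMetric.diam (Metric.closedBall (i : X) (8 * ρ k i)) ^ d ≤
          (16 : ℝ≥0∞) ^ d * (a * μ (Metric.ball (i : X) (2 * ρ k i))) := by
        intro i
        have hpos := hρ0 k i i.2
        have hdiam : EMetric.diam (Metric.closedBall (i : X) (8 * ρ k i)) ≤
            (16 : ℝ≥0∞) * ENNReal.ofReal (ρ k i) := by
          refine (hdiam' _ _ (by linarith)).trans ?_
          rw [show (16 : ℝ≥0∞) * ENNReal.ofReal (ρ k ↑i) = 2 * ENNReal.ofReal (8 * ρ k ↑i) by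
            rw [ENNReal.ofReal_mul (by norm_num : (0:ℝ) ≤ 8)]
            simp [mul_assoc]
            ring]
        calc EMetric.diam (Metric.closedBall (i : X) (8 * ρ k i)) ^ d
            ≤ ((16 : ℝ≥0∞) * ENNReal.ofReal (ρ k i)) ^ d :=
              ENNReal.rpow_le_rpow hdiam hd.le
          _ = (16 : ℝ≥0∞) ^ d * (ENNReal.ofReal (ρ k i)) ^ d :=
              ENNReal.mul_rpow_of_nonneg _ _ hd.le
          _ ≤ (16 : ℝ≥0∞) ^ d * (a * μ (Metric.ball (i : X) (2 * ρ k i))) := by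
              gcongr
              exact hρμ k i i.2
      calc (∑' i : u k, EMetric.diam (Metric.closedBall (i : X) (8 * ρ k i)) ^ d)
          ≤ ∑' i : u k, (16 : ℝ≥0∞) ^ d * (a * μ (Metric.ball (i : X) (2 * ρ k i))) :=
            ENNReal.tsum_le_tsum h1
        _ = (16 : ℝ≥0∞) ^ d * a * ∑' i : u k, μ (Metric.ball (i : X) (2 * ρ k i)) := by
            rw [ENNReal.tsum_mul_left, ENNReal.tsum_mul_left, ← mul_assoc]
        _ ≤ (16 : ℝ≥0∞) ^ d * a * μ V := by
            gcongr
            have hm : μ (⋃ y ∈ u k, Metric.ball y (2 * ρ k y)) =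
                ∑' i : u k, μ (Metric.ball (i : X) (2 * ρ k i)) :=
              measure_biUnion (hucnt k)
                ((hdisj k).mono fun y => Metric.ball_subset_closedBall)
                (fun i _ => measurableSet_ball)
            rw [← hm]
            exact measure_mono (Set.iUnion₂_subset fun y hy => hρV k y hy)
    calc liminf (fun k : ℕ => ∑' i : u k,
          EMetric.diam (Metric.closedBall (i : X) (8 * ρ k i)) ^ d) atTop
        ≤ liminf (fun _ : ℕ => (16 : ℝ≥0∞) ^ d * a * μ V) atTop :=
          liminf_le_liminf (Eventually.of_forall hbound)
      _ = (16 : ℝ≥0∞) ^ d * a * μ V := liminf_const _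
  · have h0 : Tendsto (fun k : ℕ => 16 / ((k : ℝ) + 1)) atTop (nhds 0) := by
      simpa [div_eq_mul_inv] using tendsto_one_div_add_atTop_nhds_zero_nat.const_mul (16 : ℝ)
    simpa using ENNReal.tendsto_ofReal h0
  · refine Eventually.of_forall fun k => fun i => ?_
    have hpos := hρ0 k i i.2
    have hle := hρε k i i.2
    refine (hdiam' _ _ (by linarith)).trans ?_
    calc (2 : ℝ≥0∞) * ENNReal.ofReal (8 * ρ k ↑i) = ENNReal.ofReal (16 * ρ k ↑i) := by
          rw [show (16 : ℝ) * ρ k i = 2 * (8 * ρ k i) by ring,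
            ENNReal.ofReal_mul (by norm_num : (0:ℝ) ≤ 2)]
          simp
      _ ≤ ENNReal.ofReal (16 / (k + 1)) := by
          apply ENNReal.ofReal_le_ofReal
          have h16 : (16:ℝ) * ρ k ↑i ≤ 16 * (1 / (k + 1)) :=
            mul_le_mul_of_nonneg_left hle (by norm_num)
          rw [mul_one_div] at h16
          exact h16
  · refine Eventually.of_forall fun k => ?_
    intro y hy
    have := hcov k hy
    rw [Set.mem_iUnion₂] at this
    obtain ⟨b, hb, hyb⟩ := this
    exact Set.mem_iUnion.2 ⟨⟨b, hb⟩, hyb⟩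

/-- `Df` is the weak (distributional) differential of `f` on `Ω`. -/
def IsWeakFDeriv {n : ℕ} (Ω : Set (EuclideanSpace ℝ (Fin n)))
    (f : EuclideanSpace ℝ (Fin n) → EuclideanSpace ℝ (Fin n))
    (Df : EuclideanSpace ℝ (Fin n) →
      (EuclideanSpace ℝ (Fin n) →L[ℝ] EuclideanSpace ℝ (Fin n))) : Prop :=
  ∀ φ : EuclideanSpace ℝ (Fin n) → ℝ, ContDiff ℝ (⊤ : ℕ∞) φ → HasCompactSupport φ →
    tsupport φ ⊆ Ω → ∀ v : EuclideanSpace ℝ (Fin n),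
      ∫ x, φ x • Df x v = - ∫ x, (fderiv ℝ φ x v) • f x

theorem stmt_16 (n : ℕ) (hn : 2 ≤ n) (p : ℝ)
    (h1 : (n : ℝ) - 1 < p) (h2 : p < n)
    (Ω : Set (EuclideanSpace ℝ (Fin n))) (hΩ : IsOpen Ω)
    (f g : EuclideanSpace ℝ (Fin n) → EuclideanSpace ℝ (Fin n))
    (hfc : ContinuousOn f Ω) (hgc : ContinuousOn g (f '' Ω))
    (hfΩopen : IsOpen (f '' Ω))
    (hlinv : ∀ x ∈ Ω, g (f x) = x) (hrinv : ∀ y ∈ f '' Ω, f (g y) = y)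
    (Dg : EuclideanSpace ℝ (Fin n) →
      (EuclideanSpace ℝ (Fin n) →L[ℝ] EuclideanSpace ℝ (Fin n)))
    (hDgm : Measurable fun y => ‖Dg y‖)
    (hweak : IsWeakFDeriv (f '' Ω) g Dg)
    (hploc : ∀ K, IsCompact K → K ⊆ f '' Ω →
      (∫⁻ z in K, ENNReal.ofReal ‖Dg z‖ ^ p) ≠ ⊤)
    (C : ℝ) (hC : 0 < C)
    (hosc : ∀ (y : EuclideanSpace ℝ (Fin n)) (r : ℝ), 0 < r →
      Metric.closedBall y (2 * r) ⊆ f '' Ω →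
      ENNReal.ofReal (Metric.diam (g '' Metric.ball y r)) ≤
        ENNReal.ofReal (C * r ^ (1 - (n : ℝ) / p)) *
          (∫⁻ z in Metric.ball y (2 * r), ENNReal.ofReal ‖Dg z‖ ^ p) ^ (1 / p)) :
    ∃ F ⊆ f '' Ω, μH[(n : ℝ) - p / 2] F = 0 ∧
      ∀ y ∈ (f '' Ω) \ F, ∃ Cy > (0 : ℝ), ∃ ry > (0 : ℝ), ∀ r : ℝ, 0 < r → r < ry →
        Metric.diam (g '' Metric.ball y r) ≤ Cy * r ^ ((1 : ℝ) / 2) := by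
  classical
  have hn2 : (2 : ℝ) ≤ (n : ℝ) := by exact_mod_cast hn
  have hp0 : (0 : ℝ) < p := by linarith
  set U := f '' Ω with hUdef
  set w : EuclideanSpace ℝ (Fin n) → ℝ≥0∞ := fun z => ENNReal.ofReal ‖Dg z‖ ^ p with hw
  set μ : Measure (EuclideanSpace ℝ (Fin n)) := volume.withDensity w with hμ
  set d : ℝ := (n : ℝ) - p / 2 with hdd
  have hd : 0 < d := by rw [hdd]; linarith
  have hμball : ∀ (y : EuclideanSpace ℝ (Fin n)) (r : ℝ),
      μ (Metric.ball y r) = ∫⁻ z in Metric.ball y r, w z :=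
    fun y r => withDensity_apply w measurableSet_ball
  set Good : EuclideanSpace ℝ (Fin n) → Prop := fun y => ∃ M : ℕ, ∃ r0 : ℝ, 0 < r0 ∧
    ∀ r : ℝ, 0 < r → r < r0 →
      μ (Metric.ball y (2 * r)) ≤ (M : ℝ≥0∞) * (ENNReal.ofReal r) ^ d with hGood
  refine ⟨{y ∈ U | ¬ Good y}, fun y hy => hy.1, ?_, ?_⟩
  · -- Hausdorff measure zero
    set F := {y ∈ U | ¬ Good y} with hF
    set K : ℕ → Set (EuclideanSpace ℝ (Fin n)) := fun m =>
      {y | ENNReal.ofReal (1 / (m + 1)) ≤ EMetric.infEdist y Uᶜ} ∩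
        Metric.closedBall 0 (m + 1) with hK
    have hKcomp : ∀ m, IsCompact (K m) := by
      intro m
      refine IsCompact.of_isClosed_subset (isCompact_closedBall 0 (m + 1))
        (IsClosed.inter ?_ Metric.isClosed_closedBall) Set.inter_subset_right
      exact isClosed_le continuous_const EMetric.continuous_infEdist
    have hcoverU : ∀ y ∈ U, ∃ m : ℕ, y ∈ K m := by
      intro y hyU
      have h1' : 0 < EMetric.infEdist y Uᶜ := by
        refine EMetric.infEdist_pos_iff_notMem_closure.2 ?_
        rw [hfΩopen.isClosed_compl.closure_eq]
        exact fun hc => hc hyU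
      obtain ⟨m₁, hm₁⟩ : ∃ m : ℕ, ENNReal.ofReal (1 / (m + 1)) ≤ EMetric.infEdist y Uᶜ := by
        rcases eq_or_ne (EMetric.infEdist y Uᶜ) ⊤ with htop | hne
        · exact ⟨0, htop ▸ le_top⟩
        · have het : 0 < (EMetric.infEdist y Uᶜ).toReal := ENNReal.toReal_pos h1'.ne' hne
          obtain ⟨m, hm⟩ := exists_nat_gt (1 / (EMetric.infEdist y Uᶜ).toReal)
          refine ⟨m, ?_⟩
          rw [← ENNReal.ofReal_toReal hne]
          apply ENNReal.ofReal_le_ofReal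
          rw [div_le_iff₀ (by positivity)]
          rw [div_lt_iff₀ het] at hm
          nlinarith
      obtain ⟨m₂, hm₂⟩ := exists_nat_ge (‖y‖)
      refine ⟨max m₁ m₂, ?_, ?_⟩
      · refine le_trans (ENNReal.ofReal_le_ofReal ?_) hm₁
        have : (m₁ : ℝ) ≤ (max m₁ m₂ : ℕ) := by exact_mod_cast le_max_left m₁ m₂
        apply one_div_le_one_div_of_le (by positivity)
        linarith
      · rw [mem_closedBall_zero_iff]
        have : (m₂ : ℝ) ≤ (max m₁ m₂ : ℕ) := by exact_mod_cast le_max_right m₁ m₂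
        linarith
    have hFsub : F ⊆ ⋃ m, F ∩ K m := by
      intro y hy
      obtain ⟨m, hm⟩ := hcoverU y hy.1
      exact mem_iUnion.2 ⟨m, hy, hm⟩
    refine le_antisymm (le_trans (measure_mono hFsub)
      (le_of_eq (measure_iUnion_null fun m => ?_))) zero_le
    -- per-m : μH[d] (F ∩ K m) = 0
    set V : Set (EuclideanSpace ℝ (Fin n)) :=
      Metric.cthickening (1 / (2 * (m + 1))) (K m) with hV
    have hVcomp : IsCompact V := (hKcomp m).cthickening
    have hVsub : V ⊆ U := by
      intro x hx
      rcases Set.eq_empty_or_nonempty (K m) with hKe | hKne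
      · rw [hV, hKe, Metric.cthickening_empty] at hx
        exact absurd hx (Set.notMem_empty x)
      obtain ⟨y, hyK, hyd⟩ := (hKcomp m).exists_infEdist_eq_edist hKne x
      have hxy : edist x y ≤ ENNReal.ofReal (1 / (2 * (m + 1))) := by
        rw [← hyd]; exact hx
      by_contra hxU
      have h8 : ENNReal.ofReal (1 / (m + 1)) ≤ EMetric.infEdist y Uᶜ := hyK.1
      have h9 : EMetric.infEdist y Uᶜ ≤ edist y x := EMetric.infEdist_le_edist_of_mem hxU
      rw [edist_comm] at h9
      have h10 : ENNReal.ofReal (1 / (m + 1)) ≤ ENNReal.ofReal (1 / (2 * (m + 1))) :=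
        le_trans (h8.trans h9) hxy
      rw [ENNReal.ofReal_le_ofReal_iff (by positivity)] at h10
      have hm1 : (0:ℝ) < (m:ℝ) + 1 := by positivity
      rw [div_le_div_iff₀ (by positivity) (by positivity)] at h10
      nlinarith
    have hμV : μ V ≠ ⊤ := by
      rw [hμ, withDensity_apply w hVcomp.isClosed.measurableSet]
      exact hploc V hVcomp hVsub
    have hbound : ∀ M : ℕ,
        μH[d] (F ∩ K m) ≤ (16 : ℝ≥0∞) ^ d * ((M : ℝ≥0∞) + 1)⁻¹ * μ V := by
      intro M
      apply lemA μ (F ∩ K m) V d hd _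
      intro ε hε y hy
      obtain ⟨hyF, hyK⟩ := hy
      have hbad : ¬ Good y := hyF.2
      simp only [hGood] at hbad
      push_neg at hbad
      obtain ⟨r, hr0, hrlt, hrμ⟩ := hbad (M + 1) (min ε (1 / (4 * (m + 1)))) (by positivity)
      refine ⟨r, hr0, le_trans hrlt.le (min_le_left _ _), ?_, ?_⟩
      · have h3 : ((M : ℝ≥0∞) + 1) * (ENNReal.ofReal r) ^ d ≤ μ (Metric.ball y (2 * r)) := by
          refine le_of_lt ?_
          convert hrμ using 2
          push_cast
          ring
        calc (ENNReal.ofReal r) ^ d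
            = ((M : ℝ≥0∞) + 1)⁻¹ * (((M : ℝ≥0∞) + 1) * (ENNReal.ofReal r) ^ d) := by
              rw [← mul_assoc, ENNReal.inv_mul_cancel (by simp)
                (by simp [ENNReal.add_ne_top]), one_mul]
          _ ≤ ((M : ℝ≥0∞) + 1)⁻¹ * μ (Metric.ball y (2 * r)) := mul_le_mul_right h3 _
      · have h2r : 2 * r ≤ 1 / (2 * (m + 1)) := by
          have := lt_of_lt_of_le hrlt (min_le_right _ _)
          have hm1 : (0:ℝ) < (m:ℝ) + 1 := by positivity
          rw [lt_div_iff₀ (by positivity)] at this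
          rw [le_div_iff₀ (by positivity)]
          nlinarith
        refine le_trans (le_trans Metric.ball_subset_closedBall
          (Metric.closedBall_subset_closedBall h2r)) ?_
        exact Metric.closedBall_subset_cthickening hyK _
    -- conclude zero
    by_contra h0
    set c : ℝ≥0∞ := (16 : ℝ≥0∞) ^ d * μ V with hc
    have hcne : c ≠ ⊤ :=
      ENNReal.mul_ne_top (ENNReal.rpow_ne_top_of_nonneg hd.le (by norm_num)) hμV
    have hb' : ∀ M : ℕ, μH[d] (F ∩ K m) ≤ c * ((M : ℝ≥0∞) + 1)⁻¹ := by
      intro M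
      refine (hbound M).trans_eq ?_
      rw [hc]; ring
    rcases eq_or_ne (μH[d] (F ∩ K m)) ⊤ with htop | hfin
    · have h11 := hb' 0
      rw [htop] at h11
      simp only [Nat.cast_zero, zero_add, inv_one, mul_one, top_le_iff] at h11
      exact hcne h11
    · obtain ⟨M, hM⟩ := ENNReal.exists_nat_gt (ENNReal.div_lt_top hcne h0).ne
      have h5 : c < (M : ℝ≥0∞) * μH[d] (F ∩ K m) :=
        (ENNReal.div_lt_iff (Or.inl h0) (Or.inl hfin)).1 hM
      have h6 : (M : ℝ≥0∞) * μH[d] (F ∩ K m) ≤ ((M : ℝ≥0∞) + 1) * μH[d] (F ∩ K m) :=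
        mul_le_mul_left (by simp) _
      have h7 : ((M : ℝ≥0∞) + 1) * μH[d] (F ∩ K m) ≤ c := by
        have h12 := mul_le_mul_right (hb' M) ((M : ℝ≥0∞) + 1)
        rwa [mul_comm c, ← mul_assoc, ENNReal.mul_inv_cancel (by simp)
          (by simp [ENNReal.add_ne_top]), one_mul] at h12
      exact absurd (h5.trans_le (h6.trans h7)) (lt_irrefl c)
  · -- the good points
    rintro y ⟨hyU, hyF⟩
    have hGoody : Good y := by
      by_contra hg
      exact hyF ⟨hyU, hg⟩
    obtain ⟨M, r0, hr0, hgood⟩ := hGoody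
    obtain ⟨ε, hε, hball⟩ := Metric.isOpen_iff.1 hfΩopen y hyU
    set Cy : ℝ := C * ((M : ℝ) + 1) ^ (1 / p) with hCy
    have hCypos : 0 < Cy := by positivity
    refine ⟨Cy, hCypos, min r0 (ε / 4), by positivity, ?_⟩
    intro r hr hrry
    have hrr0 : r < r0 := lt_of_lt_of_le hrry (min_le_left _ _)
    have hrε : r < ε / 4 := lt_of_lt_of_le hrry (min_le_right _ _)
    have hsub : Metric.closedBall y (2 * r) ⊆ U := by
      intro z hz
      apply hball
      rw [Metric.mem_closedBall] at hz
      rw [Metric.mem_ball]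
      linarith
    have h4 := hosc y r hr hsub
    have hIμ : (∫⁻ z in Metric.ball y (2 * r), ENNReal.ofReal ‖Dg z‖ ^ p)
        = μ (Metric.ball y (2 * r)) := (hμball y (2 * r)).symm
    rw [hIμ] at h4
    have h5 : μ (Metric.ball y (2 * r)) ≤ ENNReal.ofReal (((M : ℝ) + 1) * r ^ d) := by
      refine (hgood r hr hrr0).trans ?_
      rw [ENNReal.ofReal_mul (by positivity), ← ENNReal.ofReal_rpow_of_pos hr]
      gcongr
      · rw [← ENNReal.ofReal_natCast M]
        exact ENNReal.ofReal_le_ofReal (by linarith)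
    have h6 : ENNReal.ofReal (Metric.diam (g '' Metric.ball y r)) ≤
        ENNReal.ofReal (Cy * r ^ ((1:ℝ) / 2)) := by
      refine h4.trans ?_
      have h7 : (μ (Metric.ball y (2 * r))) ^ (1 / p) ≤
          ENNReal.ofReal ((((M : ℝ) + 1) * r ^ d) ^ (1 / p)) := by
        rw [← ENNReal.ofReal_rpow_of_pos (by positivity)]
        exact ENNReal.rpow_le_rpow h5 (by positivity)
      refine le_trans (mul_le_mul_right h7 _) ?_
      rw [← ENNReal.ofReal_mul (by positivity)]
      apply ENNReal.ofReal_le_ofReal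
      have hexp : C * r ^ (1 - (n : ℝ) / p) * (((M : ℝ) + 1) * r ^ d) ^ (1 / p)
          = Cy * r ^ ((1:ℝ) / 2) := by
        have hpne : p ≠ 0 := ne_of_gt hp0
        rw [Real.mul_rpow (by positivity) (by positivity), ← Real.rpow_mul hr.le, hCy]
        rw [show C * r ^ (1 - (n:ℝ)/p) * (((M:ℝ)+1) ^ (1/p) * r ^ (d * (1/p)))
            = C * ((M:ℝ)+1) ^ (1/p) * (r ^ (1 - (n:ℝ)/p) * r ^ (d * (1/p))) by ring,
          ← Real.rpow_add hr]
        congr 2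
        rw [hdd]
        field_simp
        ring
      rw [hexp]
    rw [ENNReal.ofReal_le_ofReal_iff (by positivity)] at h6
    exact h6
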